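/- With parameters p = √2 − 1 and α = √(2 + 2√2), the (random) output S of algorithm LAR is always feasible (c(S) ≤ B) and satisfies opt ≤ 16.034 · E[f(S)], where opt = max{f(T) : T ⊆ V, c(T) ≤ B}; i.e., LAR is a randomized 16.034-approximation in expectation. -/

import Mathlib

open scoped BigOperators Classical

/-- The cost of a set is the (modular) sum of the costs of its elements. -/
noncomputable def cost {α : Type*} (c : α → ℝ) (S : Finset α) : ℝ := ∑ e ∈ S, c e

/-- Marginal gain `f(e|S) = f(S ∪ {e}) − f(S)`. -/
noncomputable def marg {α : Type*} [DecidableEq α] (f : Finset α → ℝ) (e : α)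
    (S : Finset α) : ℝ := f (insert e S) - f S

/-- The longest prefix of a list whose total cost is at most the given budget
(costs being positive, this is the prefix of maximal length fitting in the budget). -/
noncomputable def takeCost {α : Type*} (c : α → ℝ) : ℝ → List α → List α
  | _, [] => []
  | b, a :: t => if c a ≤ b then a :: takeCost c (b - c a) t else []

/-- The scan of algorithm `LAR`: starting from `S = ∅`, scan the given list once, adding
the current element `e` to `S` whenever `f(e|S)/c(e) ≥ α f(S)/B`.  The set `S` is kept as
a list in order of insertion (oldest first). -/
noncomputable def larScan {α : Type*} [DecidableEq α] (f : Finset α → ℝ) (c : α → ℝ)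
    (B a : ℝ) (L : List α) : List α :=
  L.foldl (fun S e =>
    if a * f S.toFinset / B ≤ marg f e S.toFinset / c e then S ++ [e] else S) []

/-- The output of algorithm `LAR` given the random sample `R ⊆ V1` (the realization of
`V_p`): scan the elements of `R` (in the fixed order given by `l1`), take `S'` to be the
largest number of most-recently-added elements of `S` of total cost at most `B`, and
return the better of `S'` and `{emax}`. -/
noncomputable def larOut {α : Type*} [DecidableEq α] (f : Finset α → ℝ) (c : α → ℝ)
    (B a : ℝ) (l1 : List α) (R : Finset α) (emax : α) : Finset α :=
  let S' := (takeCost c B (larScan f c B a (l1.filter (fun e => e ∈ R))).reverse).toFinset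
  if f S' ≤ f {emax} then {emax} else S'

/-!
Let `S` be the set chosen by the scan on the sample `R`, and `T_e` the scan's state when it reaches
`e`; `T_e` does not depend on whether `e ∈ R`. For `e` in an optimal `O₁ ⊆ V₁` with `e ∉ S`,
submodularity gives `f(e | S) ≤ f(e | T_e)`, which is below the threshold `α c(e) f(T_e)/B` if `e`
was sampled and rejected. If `e` was not sampled, independence turns `E[f(e | T_e); e ∉ R]` into
`(1 - p)/p · E[f(e | T_e); e ∈ R]`, and the sampled marginals are either accepted (these sum to at
most `f(S)`) or below the threshold. With `f(T_e) ≤ f(S)` and the sampling lemma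
`E f(O₁ ∪ S) ≥ (1 - p) f(O₁)` (each element lies in `S` with probability at most `p`) this gives
`p (1 - p) f(O₁) ≤ (1 + p α c(O₁)/B) E f(S)`.

Keeping only the newest elements of `S` within the budget loses at most a factor `(α + 2)/α`: if
anything is dropped, the kept part costs more than `B/2`, and each of its elements raised `f` by at
least `α c(e)/B` times the value of the dropped part. At most one element of `O` costs more than
`B/2`, and it is paid for by `e_max`.
-/

section

variable {α : Type*}

section BernoulliExp

variable {p : ℝ} {U : Finset α}

def bernoulliWeight (p : ℝ) (U R : Finset α) : ℝ := p ^ R.card * (1 - p) ^ (U.card - R.card)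

/-- The expectation of `φ R` for a random `R ⊆ U` containing each element of `U` independently
with probability `p`. -/
def bernoulliExp (p : ℝ) (U : Finset α) (φ : Finset α → ℝ) : ℝ :=
  ∑ R ∈ U.powerset, bernoulliWeight p U R * φ R

theorem bernoulliWeight_nonneg (hp0 : 0 ≤ p) (hp1 : p ≤ 1) (U R : Finset α) :
    0 ≤ bernoulliWeight p U R :=
  mul_nonneg (pow_nonneg hp0 _) (pow_nonneg (sub_nonneg.2 hp1) _)

theorem sum_bernoulliWeight (p : ℝ) (U : Finset α) :
    ∑ R ∈ U.powerset, bernoulliWeight p U R = 1 := by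
  simp [bernoulliWeight, Finset.sum_pow_mul_eq_add_pow]

theorem bernoulliExp_const (p : ℝ) (U : Finset α) (k : ℝ) :
    bernoulliExp p U (fun _ => k) = k := by
  rw [bernoulliExp, ← Finset.sum_mul, sum_bernoulliWeight, one_mul]

theorem bernoulliExp_add (φ ψ : Finset α → ℝ) :
    bernoulliExp p U (fun R => φ R + ψ R) = bernoulliExp p U φ + bernoulliExp p U ψ := by
  simp only [bernoulliExp, mul_add, Finset.sum_add_distrib]

theorem bernoulliExp_const_mul (k : ℝ) (φ : Finset α → ℝ) :
    bernoulliExp p U (fun R => k * φ R) = k * bernoulliExp p U φ := by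
  simp only [bernoulliExp, Finset.mul_sum]
  exact Finset.sum_congr rfl fun R _ => by ring

theorem bernoulliExp_sum {ι : Type*} (s : Finset ι) (φ : ι → Finset α → ℝ) :
    bernoulliExp p U (fun R => ∑ i ∈ s, φ i R) = ∑ i ∈ s, bernoulliExp p U (φ i) := by
  simp only [bernoulliExp, Finset.mul_sum]
  exact Finset.sum_comm

theorem bernoulliExp_congr {φ ψ : Finset α → ℝ} (h : ∀ R ⊆ U, φ R = ψ R) :
    bernoulliExp p U φ = bernoulliExp p U ψ :=
  Finset.sum_congr rfl fun R hR => by rw [h R (Finset.mem_powerset.1 hR)]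

theorem bernoulliExp_mono (hp0 : 0 ≤ p) (hp1 : p ≤ 1) {φ ψ : Finset α → ℝ}
    (h : ∀ R ⊆ U, φ R ≤ ψ R) : bernoulliExp p U φ ≤ bernoulliExp p U ψ :=
  Finset.sum_le_sum fun R hR => mul_le_mul_of_nonneg_left (h R (Finset.mem_powerset.1 hR))
    (bernoulliWeight_nonneg hp0 hp1 U R)

theorem bernoulliExp_nonneg (hp0 : 0 ≤ p) (hp1 : p ≤ 1) {φ : Finset α → ℝ}
    (hφ : ∀ R ⊆ U, 0 ≤ φ R) : 0 ≤ bernoulliExp p U φ :=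
  (bernoulliExp_const p U 0).symm.le.trans (bernoulliExp_mono hp0 hp1 hφ)

variable [DecidableEq α]

theorem bernoulliExp_insert {e : α} (he : e ∉ U) (φ : Finset α → ℝ) :
    bernoulliExp p (insert e U) φ =
      (1 - p) * bernoulliExp p U φ + p * bernoulliExp p U (fun R => φ (insert e R)) := by
  rw [bernoulliExp, Finset.sum_powerset_insert he, bernoulliExp, bernoulliExp, Finset.mul_sum,
    Finset.mul_sum]
  congr 1 <;> refine Finset.sum_congr rfl fun R hR => ?_
  all_goals
    have hRU := Finset.card_le_card (Finset.mem_powerset.1 hR)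
    have heR : e ∉ R := fun h => he (Finset.mem_powerset.1 hR h)
    simp only [bernoulliWeight, Finset.card_insert_of_notMem he,
      Finset.card_insert_of_notMem heR, Nat.add_sub_add_right, Nat.succ_sub hRU, pow_succ]
    ring

theorem bernoulliExp_ite {e : α} (he : e ∈ U) {φ ψ : Finset α → ℝ}
    (hφ : ∀ R, φ (R.erase e) = φ R) (hψ : ∀ R, ψ (R.erase e) = ψ R) :
    bernoulliExp p U (fun R => if e ∈ R then φ R else ψ R) =
      p * bernoulliExp p U φ + (1 - p) * bernoulliExp p U ψ := by
  have heU := Finset.notMem_erase e U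
  have hnot : ∀ R ⊆ U.erase e, e ∉ R := fun R hR h => heU (hR h)
  have hins : ∀ χ : Finset α → ℝ, (∀ R, χ (R.erase e) = χ R) →
      ∀ R ⊆ U.erase e, χ (insert e R) = χ R := fun χ hχ R hR => by
    rw [← hχ, Finset.erase_insert (hnot R hR)]
  have hdrop : ∀ χ : Finset α → ℝ, (∀ R, χ (R.erase e) = χ R) →
      bernoulliExp p U χ = bernoulliExp p (U.erase e) χ := fun χ hχ => by
    rw [← Finset.insert_erase he, bernoulliExp_insert heU, Finset.insert_erase he,
      bernoulliExp_congr (hins χ hχ)]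
    ring
  rw [hdrop φ hφ, hdrop ψ hψ]
  conv_lhs => rw [← Finset.insert_erase he]
  rw [bernoulliExp_insert heU,
    bernoulliExp_congr fun R hR => if_neg (hnot R hR),
    bernoulliExp_congr fun R hR => (if_pos (Finset.mem_insert_self e R)).trans (hins φ hφ R hR)]
  ring

end BernoulliExp

section Preceding

variable [DecidableEq α]

theorem toFinset_append_singleton (l : List α) (e : α) :
    (l ++ [e]).toFinset = insert e l.toFinset := by
  ext
  simp

def preceding (l : List α) (e : α) : Finset α := (l.takeWhile (· ≠ e)).toFinset

theorem notMem_preceding (l : List α) (e : α) : e ∉ preceding l e := fun h => by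
  simpa using List.mem_takeWhile_imp (List.mem_toFinset.1 h)

theorem preceding_subset (l : List α) (e : α) : preceding l e ⊆ l.toFinset := fun _ hx =>
  List.mem_toFinset.2 ((List.takeWhile_sublist _).subset (List.mem_toFinset.1 hx))

theorem takeWhile_ne_append_cons {A : List α} {e : α} (he : e ∉ A) (C : List α) :
    (A ++ e :: C).takeWhile (· ≠ e) = A := by
  rw [List.takeWhile_append_of_pos (fun x hx => by simpa using ne_of_mem_of_not_mem hx he)]
  simp

theorem preceding_append_cons {A : List α} {e : α} (he : e ∉ A) (C : List α) :
    preceding (A ++ e :: C) e = A.toFinset := by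
  rw [preceding, takeWhile_ne_append_cons he]

theorem eq_takeWhile_append_cons {l : List α} {e : α} (hl : l.Nodup) (he : e ∈ l) :
    ∃ C, l = l.takeWhile (· ≠ e) ++ e :: C := by
  obtain ⟨A, C, rfl⟩ := List.append_of_mem he
  have heA : e ∉ A := fun h =>
    (List.nodup_cons.1 (List.nodup_middle.1 hl)).1 (List.mem_append_left C h)
  exact ⟨C, by rw [takeWhile_ne_append_cons heA C]⟩

theorem preceding_append_of_mem {l : List α} {y : α} (hy : y ∈ l) (l' : List α) :
    preceding (l ++ l') y = preceding l y := by
  rw [preceding, preceding, List.takeWhile_append, if_neg]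
  intro h
  rw [← (List.takeWhile_prefix _).eq_of_length h] at hy
  simpa using List.mem_takeWhile_imp hy

theorem sum_preceding_append_singleton (φ : α → Finset α → ℝ) {l : List α} {e : α}
    (he : e ∉ l) :
    ∑ y ∈ (l ++ [e]).toFinset, φ y (preceding (l ++ [e]) y) =
      ∑ y ∈ l.toFinset, φ y (preceding l y) + φ e l.toFinset := by
  rw [toFinset_append_singleton, Finset.sum_insert (by simpa using he), add_comm,
    preceding_append_cons he]
  congr 1
  exact Finset.sum_congr rfl fun y hy => by rw [preceding_append_of_mem (List.mem_toFinset.1 hy)]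

theorem takeWhile_filter_ne {q : α → Bool} {e : α} (hq : q e) (l : List α) :
    (l.filter q).takeWhile (· ≠ e) = (l.takeWhile (· ≠ e)).filter q := by
  rw [List.takeWhile_filter]
  congr 2
  funext y
  by_cases hy : y = e <;> simp_all

theorem eq_add_sum_marg_preceding (f : Finset α → ℝ) {l : List α} (hl : l.Nodup) :
    f l.toFinset = f ∅ + ∑ x ∈ l.toFinset, marg f x (preceding l x) := by
  induction l using List.reverseRecOn with
  | nil => simp
  | append_singleton l e ih =>
    obtain ⟨he, hl⟩ := List.nodup_concat l e |>.1 (by simpa using hl)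
    rw [sum_preceding_append_singleton (fun x s => marg f x s) he, ← add_assoc, ← ih hl, marg,
      toFinset_append_singleton]
    ring

/-- Abel summation: as `x` decreases along `l`, the sum is a nonnegative combination of the values
of `g` on prefixes of `l`, minus at most `p * g ∅`. -/
theorem sub_le_sum_mul_marg_preceding {g : Finset α → ℝ} {x : α → ℝ} {p m : ℝ} {l : List α}
    (hl : l.Nodup) (hsort : l.Pairwise fun u v => x v ≤ x u) (hg : ∀ X ⊆ l.toFinset, 0 ≤ g X)
    (hxp : ∀ e ∈ l, x e ≤ p) (hm : 0 ≤ m) (hmp : m ≤ p) (hmx : ∀ e ∈ l, m ≤ x e) :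
    m * g l.toFinset - p * g ∅ ≤ ∑ e ∈ l.toFinset, x e * marg g e (preceding l e) := by
  induction l using List.reverseRecOn generalizing m with
  | nil =>
    simp only [List.toFinset_nil, Finset.sum_empty]
    nlinarith [hg ∅ (by simp)]
  | append_singleton l e ih =>
    obtain ⟨he, hl⟩ := List.nodup_concat l e |>.1 (by simpa using hl)
    obtain ⟨hsort, -, hlast⟩ := List.pairwise_append.1 hsort
    have hsub : l.toFinset ⊆ (l ++ [e]).toFinset := by simp
    have hx := ih hl hsort (fun X hX => hg X (hX.trans hsub)) (fun y hy => hxp y (by simp [hy]))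
      (hm.trans (hmx e (by simp))) (hxp e (by simp)) (fun y hy => hlast y hy e (by simp))
    have hge : m * g (l ++ [e]).toFinset ≤ x e * g (insert e l.toFinset) := by
      rw [toFinset_append_singleton]
      exact mul_le_mul_of_nonneg_right (hmx e (by simp))
        (hg _ (toFinset_append_singleton l e ▸ le_rfl))
    rw [sum_preceding_append_singleton (fun y s => x y * marg g y s) he, marg]
    linarith

end Preceding

section Submodular

variable [DecidableEq α]

def SubmodularOn (f : Finset α → ℝ) (V : Finset α) : Prop :=
  ∀ A B : Finset α, A ⊆ B → B ⊆ V → ∀ e ∈ V, e ∉ B → marg f e B ≤ marg f e A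

namespace SubmodularOn

variable {f : Finset α → ℝ} {V : Finset α}

theorem comp_union (hf : SubmodularOn f V) {O U : Finset α} (hO : O ⊆ V) (hU : U ⊆ V) :
    SubmodularOn (fun X => f (O ∪ X)) U := by
  intro A B hAB hBU e heU heB
  by_cases heO : e ∈ O
  · simp [marg, Finset.union_insert, Finset.insert_eq_of_mem (Finset.mem_union_left _ heO)]
  · simp only [marg, Finset.union_insert]
    exact hf _ _ (Finset.union_subset_union_right hAB) (Finset.union_subset hO (hBU.trans hU))
      e (hU heU) (by simp [heO, heB])

theorem le_add_sum_marg (hf : SubmodularOn f V) {A B : Finset α} (hA : A ⊆ V) (hB : B ⊆ V) :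
    f (A ∪ B) ≤ f B + ∑ e ∈ A \ B, marg f e B := by
  induction A using Finset.induction_on with
  | empty => simp
  | @insert x A hx ih =>
    obtain ⟨hxV, hAV⟩ := Finset.insert_subset_iff.1 hA
    by_cases hxB : x ∈ B
    · rw [Finset.insert_union, Finset.insert_eq_of_mem (Finset.mem_union_right _ hxB),
        Finset.insert_sdiff_of_mem _ hxB]
      exact ih hAV
    · have hmarg := hf B (A ∪ B) Finset.subset_union_right (Finset.union_subset hAV hB) x hxV
        (by simp [hx, hxB])
      have hAB : f (insert x (A ∪ B)) = f (A ∪ B) + marg f x (A ∪ B) := by rw [marg]; ring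
      rw [Finset.insert_union, Finset.insert_sdiff_of_notMem _ hxB,
        Finset.sum_insert (by simp [hx]), hAB]
      linarith [ih hAV]

theorem union_sub_le (hf : SubmodularOn f V) {Q W : Finset α} (hQ : Q ⊆ V) (hW : W ⊆ V)
    (hQW : Disjoint Q W) : f (Q ∪ W) - f Q ≤ f W - f ∅ := by
  induction W using Finset.induction_on with
  | empty => simp
  | @insert x W hx ih =>
    obtain ⟨hxV, hWV⟩ := Finset.insert_subset_iff.1 hW
    obtain ⟨hxQ, hQW⟩ := Finset.disjoint_insert_right.1 hQW
    have hmarg := hf W (Q ∪ W) Finset.subset_union_right (Finset.union_subset hQ hWV) x hxV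
      (by simp [hx, hxQ])
    rw [Finset.union_insert]
    unfold marg at hmarg
    linarith [ih hWV hQW]

theorem le_erase_add_singleton (hf : SubmodularOn f V) {O : Finset α} (hO : O ⊆ V) {o : α}
    (ho : o ∈ O) : f O ≤ f (O.erase o) + f {o} - f ∅ := by
  have := hf ∅ (O.erase o) (Finset.empty_subset _) ((Finset.erase_subset o O).trans hO) o (hO ho)
    (Finset.notMem_erase o O)
  rw [marg, marg, Finset.insert_erase ho, Finset.insert_empty] at this
  linarith

theorem add_sum_marg_preceding_le (hf : SubmodularOn f V) {l : List α} (hl : l.Nodup)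
    (hlV : l.toFinset ⊆ V) {D : Finset α} (hD : D ⊆ l.toFinset) :
    f ∅ + ∑ e ∈ D, marg f e (preceding l e) ≤ f D := by
  have hDl : (l.filter (· ∈ D)).toFinset = D := by
    ext x
    simpa using fun hx => List.mem_toFinset.1 (hD hx)
  conv_rhs => rw [← hDl, eq_add_sum_marg_preceding f (hl.filter _), hDl]
  gcongr with e he
  refine hf _ _ ?_ ((preceding_subset l e).trans hlV) e (hlV (hD he)) (notMem_preceding l e)
  rw [preceding, preceding, takeWhile_filter_ne (by simpa using he)]
  exact fun y hy => List.mem_toFinset.2 (List.filter_subset_self _ (List.mem_toFinset.1 hy))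

/-- The sampling lemma of Buchbinder, Feldman, Naor and Schwartz. -/
theorem sampling {g : Finset α → ℝ} {U : Finset α} (hg : SubmodularOn g U)
    (hg0 : ∀ X ⊆ U, 0 ≤ g X) {ι : Type*} {Ω : Finset ι} {w : ι → ℝ}
    (hw0 : ∀ ω ∈ Ω, 0 ≤ w ω) (hw1 : ∑ ω ∈ Ω, w ω = 1) {D : ι → Finset α}
    (hD : ∀ ω ∈ Ω, D ω ⊆ U) {p : ℝ} (hp : 0 ≤ p)
    (hDp : ∀ e ∈ U, ∑ ω ∈ Ω, w ω * (if e ∈ D ω then 1 else 0) ≤ p) :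
    (1 - p) * g ∅ ≤ ∑ ω ∈ Ω, w ω * g (D ω) := by
  set x : α → ℝ := fun e => ∑ ω ∈ Ω, w ω * (if e ∈ D ω then 1 else 0)
  -- list `U` by decreasing probability of membership in `D`
  set l := U.toList.mergeSort fun u v => decide (x v ≤ x u)
  have hperm : l.Perm U.toList := List.mergeSort_perm _ _
  have hl : l.Nodup := hperm.nodup_iff.2 U.nodup_toList
  have hlU : l.toFinset = U := by rw [List.toFinset_eq_of_perm _ _ hperm, Finset.toList_toFinset]
  have hsort : l.Pairwise fun u v => x v ≤ x u := by
    simpa using List.pairwise_mergeSort (le := fun u v => decide (x v ≤ x u))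
      (fun a b c hab hbc => by simp only [decide_eq_true_eq] at *; linarith)
      (fun a b => by simpa using le_total (x b) (x a)) U.toList
  have hx0 : ∀ e, 0 ≤ x e := fun e =>
    Finset.sum_nonneg fun ω hω => mul_nonneg (hw0 ω hω) (by split_ifs <;> norm_num)
  have habel := sub_le_sum_mul_marg_preceding (m := 0) hl hsort (hlU ▸ hg0)
    (fun e he => hDp e (hlU ▸ List.mem_toFinset.2 he)) le_rfl hp (fun e _ => hx0 e)
  have hchain : ∀ ω ∈ Ω, g ∅ + ∑ e ∈ U, (if e ∈ D ω then 1 else 0) *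
      marg g e (preceding l e) ≤ g (D ω) := fun ω hω => by
    simp only [ite_mul, one_mul, zero_mul]
    rw [Finset.sum_ite_mem, Finset.inter_eq_right.2 (hD ω hω)]
    exact hg.add_sum_marg_preceding_le hl hlU.le (hlU ▸ hD ω hω)
  calc (1 - p) * g ∅ ≤ g ∅ + ∑ e ∈ U, x e * marg g e (preceding l e) := by
        rw [← hlU]; linarith
    _ = ∑ ω ∈ Ω, (w ω * g ∅ + w ω * ∑ e ∈ U, (if e ∈ D ω then 1 else 0) *
          marg g e (preceding l e)) := by
        rw [Finset.sum_add_distrib, ← Finset.sum_mul, hw1, one_mul]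
        simp only [x, Finset.mul_sum, Finset.sum_mul]
        rw [Finset.sum_comm]
        simp only [mul_assoc]
    _ ≤ ∑ ω ∈ Ω, w ω * g (D ω) := Finset.sum_le_sum fun ω hω => by
        rw [← mul_add]
        exact mul_le_mul_of_nonneg_left (hchain ω hω) (hw0 ω hω)

end SubmodularOn

end Submodular

theorem takeCost_prefix (c : α → ℝ) (b : ℝ) (L : List α) : takeCost c b L <+: L := by
  induction L generalizing b with
  | nil => exact List.prefix_refl _
  | cons x L ih =>
    rw [takeCost]
    split_ifs
    · exact (List.prefix_cons_inj x).2 (ih _)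
    · exact List.nil_prefix

theorem sum_takeCost_le (c : α → ℝ) {b : ℝ} (hb : 0 ≤ b) (L : List α) :
    ((takeCost c b L).map c).sum ≤ b := by
  induction L generalizing b with
  | nil => simpa [takeCost] using hb
  | cons x L ih =>
    rw [takeCost]
    split_ifs with hx
    · simpa using (by linarith [ih (sub_nonneg.2 hx)] :
        c x + ((takeCost c (b - c x) L).map c).sum ≤ b)
    · simpa using hb

theorem takeCost_eq_or_exists_lt (c : α → ℝ) (b : ℝ) (L : List α) :
    takeCost c b L = L ∨ ∃ x ∈ L, b < ((takeCost c b L).map c).sum + c x := by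
  induction L generalizing b with
  | nil => exact Or.inl rfl
  | cons x L ih =>
    rw [takeCost]
    split_ifs with hx
    · rcases ih (b - c x) with h | ⟨y, hy, hlt⟩
      · exact Or.inl (by rw [h])
      · exact Or.inr ⟨y, List.mem_cons_of_mem x hy, by simp; linarith⟩
    · exact Or.inr ⟨x, List.mem_cons_self, by simpa using hx⟩

section Scan

variable [DecidableEq α] {f : Finset α → ℝ} {c : α → ℝ} {B a : ℝ}

def DensityChain (f : Finset α → ℝ) (c : α → ℝ) (B a : ℝ) (S : List α) : Prop :=
  ∀ P x, P ++ [x] <+: S → a * f P.toFinset / B ≤ marg f x P.toFinset / c x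

theorem larScan_append_singleton (L : List α) (e : α) :
    larScan f c B a (L ++ [e]) =
      if a * f (larScan f c B a L).toFinset / B ≤ marg f e (larScan f c B a L).toFinset / c e
      then larScan f c B a L ++ [e] else larScan f c B a L := by
  simp only [larScan, List.foldl_append, List.foldl_cons, List.foldl_nil]
  congr

theorem larScan_append (L₁ L₂ : List α) :
    ∃ Z, larScan f c B a (L₁ ++ L₂) = larScan f c B a L₁ ++ Z ∧ List.Sublist Z L₂ := by
  induction L₂ using List.reverseRecOn with
  | nil => exact ⟨[], by simp, List.nil_sublist _⟩
  | append_singleton L₂ e ih =>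
    obtain ⟨Z, hZ, hZL⟩ := ih
    rw [← List.append_assoc, larScan_append_singleton, hZ]
    split_ifs
    · exact ⟨Z ++ [e], by simp, hZL.append (List.Sublist.refl _)⟩
    · exact ⟨Z, rfl, hZL.trans (List.sublist_append_left _ _)⟩

theorem larScan_sublist (L : List α) : List.Sublist (larScan f c B a L) L := by
  obtain ⟨Z, hZ, hZL⟩ := larScan_append (f := f) (c := c) (B := B) (a := a) [] L
  rw [List.nil_append] at hZ
  exact hZ ▸ hZL

theorem List.Nodup.larScan {L : List α} (hL : L.Nodup) : (larScan f c B a L).Nodup :=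
  (larScan_sublist L).nodup hL

theorem densityChain_larScan (L : List α) : DensityChain f c B a (larScan f c B a L) := by
  induction L using List.reverseRecOn with
  | nil => intro P x h; exact absurd h.length_le (by simp [larScan])
  | append_singleton L e ih =>
    rw [larScan_append_singleton]
    split_ifs with h
    · intro P x hP
      rcases List.prefix_concat_iff.1 hP with h' | h'
      · obtain ⟨rfl, hx⟩ := List.append_inj' h' rfl
        obtain rfl : x = e := by simpa using hx
        exact h
      · exact ih P x h'
    · exact ih

namespace DensityChain

theorem of_prefix {S S' : List α} (h : DensityChain f c B a S') (hS : S <+: S') :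
    DensityChain f c B a S := fun P x hP => h P x (hP.trans hS)

theorem mul_le_marg {P : List α} {x : α} (h : DensityChain f c B a (P ++ [x]))
    (hx : 0 < c x) : a * c x * f P.toFinset / B ≤ marg f x P.toFinset := by
  have := (le_div_iff₀ hx).1 (h P x (List.prefix_refl _))
  linarith [show a * c x * f P.toFinset / B = a * f P.toFinset / B * c x by ring]

theorem mul_le {Q W : List α} (h : DensityChain f c B a (Q ++ W)) (ha : 0 ≤ a)
    (hB : 0 < B) (hc : ∀ x ∈ W, 0 < c x) (hQ : 0 ≤ f Q.toFinset) :
    f Q.toFinset * (1 + a * (W.map c).sum / B) ≤ f (Q ++ W).toFinset := by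
  induction W using List.reverseRecOn with
  | nil => simp
  | append_singleton W x ih =>
    rw [← List.append_assoc] at h ⊢
    have hcW : ∀ y ∈ W, 0 < c y := fun y hy => hc y (by simp [hy])
    have hW := ih (h.of_prefix (List.prefix_append _ _)) hcW
    have hsum : 0 ≤ (W.map c).sum := List.sum_nonneg (by simpa using fun y hy => (hcW y hy).le)
    have hmono : f Q.toFinset ≤ f (Q ++ W).toFinset := le_trans (le_mul_of_one_le_right hQ
      (le_add_of_nonneg_right (by positivity))) hW
    have hmarg := h.mul_le_marg (hc x (by simp))
    have hstep : a * c x * f Q.toFinset / B ≤ a * c x * f (Q ++ W).toFinset / B := by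
      have := (hc x (by simp)).le
      gcongr
    rw [marg] at hmarg
    rw [toFinset_append_singleton]
    simp only [List.map_append, List.map_cons, List.map_nil, List.sum_append, List.sum_cons,
      List.sum_nil, add_zero]
    have : f Q.toFinset * (1 + a * ((W.map c).sum + c x) / B) =
      f Q.toFinset * (1 + a * (W.map c).sum / B) + a * c x * f Q.toFinset / B := by ring
    linarith

theorem le_append {Q W : List α} (h : DensityChain f c B a (Q ++ W)) (ha : 0 ≤ a)
    (hB : 0 < B) (hc : ∀ x ∈ W, 0 < c x) (hQ : 0 ≤ f Q.toFinset) :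
    f Q.toFinset ≤ f (Q ++ W).toFinset := by
  have hsum : 0 ≤ (W.map c).sum := List.sum_nonneg (by simpa using fun y hy => (hc y hy).le)
  exact le_trans (le_mul_of_one_le_right hQ (le_add_of_nonneg_right (by positivity)))
    (h.mul_le ha hB hc hQ)

/-- If the budget forces dropping some of the oldest elements, the kept ones cost more than
`B / 2`, so by `mul_le` the dropped prefix is worth at most `2 / (a + 2)` of the whole chain. -/
theorem mul_le_takeCost {V : Finset α} {S : List α} (h : DensityChain f c B a S) (hS : S.Nodup)
    (hSV : S.toFinset ⊆ V) (hf : SubmodularOn f V) (hnn : ∀ X ⊆ V, 0 ≤ f X) (hnorm : f ∅ = 0)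
    (ha : 0 ≤ a) (hB : 0 < B) (hc : ∀ x ∈ S, 0 < c x ∧ c x ≤ B / 2) :
    a * f S.toFinset ≤ (a + 2) * f (takeCost c B S.reverse).toFinset := by
  obtain ⟨Qr, hQr⟩ := takeCost_prefix c B S.reverse
  set W := (takeCost c B S.reverse).reverse
  set Q := Qr.reverse
  have hSQW : S = Q ++ W := by
    rw [← List.reverse_reverse S, ← hQr, List.reverse_append]
  have hWfin : (takeCost c B S.reverse).toFinset = W.toFinset := by simp [W]
  rcases takeCost_eq_or_exists_lt c B S.reverse with htc | ⟨x, hx, hlt⟩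
  · rw [htc, List.toFinset_reverse]
    nlinarith [hnn _ hSV]
  have hQW : (Q ++ W).toFinset ⊆ V := hSQW ▸ hSV
  rw [List.toFinset_append] at hQW
  have hQ : 0 ≤ f Q.toFinset := hnn _ (Finset.union_subset_left hQW)
  have hcostW : B / 2 ≤ (W.map c).sum := by
    have := (hc x (List.mem_reverse.1 hx)).2
    simp only [W, List.map_reverse, List.sum_reverse]
    linarith
  have hgrowth := (hSQW ▸ h).mul_le ha hB
    (fun y hy => (hc y (hSQW ▸ List.mem_append_right Q hy)).1) hQ
  have hdisj : Disjoint Q.toFinset W.toFinset := by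
    rw [hSQW] at hS
    exact List.disjoint_toFinset_iff_disjoint.2 (List.disjoint_of_nodup_append hS)
  have hunion := hf.union_sub_le (Finset.union_subset_left hQW) (Finset.union_subset_right hQW)
    hdisj
  rw [hWfin, hSQW]
  rw [List.toFinset_append] at hgrowth ⊢
  have : a / 2 ≤ a * (W.map c).sum / B := by
    rw [div_le_div_iff₀ two_pos hB]
    nlinarith
  nlinarith

end DensityChain

end Scan

section LARState

variable [DecidableEq α] {f : Finset α → ℝ} {c : α → ℝ} {B a : ℝ} {l1 : List α} {R : Finset α}

noncomputable def larState (f : Finset α → ℝ) (c : α → ℝ) (B a : ℝ) (l1 : List α)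
    (R : Finset α) (e : α) : List α :=
  larScan f c B a ((l1.takeWhile (· ≠ e)).filter (· ∈ R))

noncomputable def larSet (f : Finset α → ℝ) (c : α → ℝ) (B a : ℝ) (l1 : List α) (R : Finset α) :
    Finset α :=
  (larScan f c B a (l1.filter (· ∈ R))).toFinset

theorem mem_larSet {x : α} : x ∈ larSet f c B a l1 R ↔ x ∈ larScan f c B a (l1.filter (· ∈ R)) :=
  List.mem_toFinset

theorem larState_prefix (e : α) :
    larState f c B a l1 R e <+: larScan f c B a (l1.filter (· ∈ R)) := by
  obtain ⟨Z, hZ, -⟩ := larScan_append (f := f) (c := c) (B := B) (a := a)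
    ((l1.takeWhile (· ≠ e)).filter (· ∈ R)) ((l1.dropWhile (· ≠ e)).filter (· ∈ R))
  rw [← List.filter_append, List.takeWhile_append_dropWhile] at hZ
  exact ⟨Z, hZ.symm⟩

theorem larState_subset (e : α) : (larState f c B a l1 R e).toFinset ⊆ larSet f c B a l1 R :=
  fun _ hx => List.mem_toFinset.2 ((larState_prefix e).subset (List.mem_toFinset.1 hx))

theorem larState_erase (e : α) : larState f c B a l1 (R.erase e) e = larState f c B a l1 R e := by
  refine congrArg _ (List.filter_congr fun x hx => ?_)
  have : x ≠ e := by simpa using List.mem_takeWhile_imp hx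
  simp [this]

theorem notMem_larState (e : α) : e ∉ larState f c B a l1 R e := fun h => by
  simpa using List.mem_takeWhile_imp (List.mem_of_mem_filter ((larScan_sublist _).subset h))

theorem mem_of_mem_larScan {x : α} (hx : x ∈ larScan f c B a (l1.filter (· ∈ R))) :
    x ∈ l1 ∧ x ∈ R := by
  simpa using (larScan_sublist _).subset hx

theorem mem_of_mem_larSet {x : α} (hx : x ∈ larSet f c B a l1 R) : x ∈ l1 ∧ x ∈ R :=
  mem_of_mem_larScan (mem_larSet.1 hx)

theorem larScan_filter_eq (hl1 : l1.Nodup) {e : α} (he : e ∈ l1) (heR : e ∈ R) :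
    ∃ Z, e ∉ Z ∧ larScan f c B a (l1.filter (· ∈ R)) =
      (if a * f (larState f c B a l1 R e).toFinset / B ≤
          marg f e (larState f c B a l1 R e).toFinset / c e
        then larState f c B a l1 R e ++ [e] else larState f c B a l1 R e) ++ Z := by
  obtain ⟨C, hC⟩ := eq_takeWhile_append_cons hl1 he
  have heC : e ∉ C := by
    rw [hC] at hl1
    exact (List.nodup_cons.1 (List.nodup_append.1 hl1).2.1).1
  obtain ⟨Z, hZ, hZC⟩ := larScan_append (f := f) (c := c) (B := B) (a := a)
    ((l1.takeWhile (· ≠ e)).filter (· ∈ R) ++ [e]) (C.filter (· ∈ R))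
  refine ⟨Z, fun h => heC (List.mem_of_mem_filter (hZC.subset h)), ?_⟩
  rw [larState, ← larScan_append_singleton, ← hZ]
  conv_lhs => rw [hC]
  simp [List.filter_append, heR]

theorem mem_larScan_iff (hl1 : l1.Nodup) {e : α} (he : e ∈ l1) :
    e ∈ larScan f c B a (l1.filter (· ∈ R)) ↔ e ∈ R ∧
      a * f (larState f c B a l1 R e).toFinset / B ≤
        marg f e (larState f c B a l1 R e).toFinset / c e := by
  by_cases heR : e ∈ R
  · obtain ⟨Z, heZ, hZ⟩ := larScan_filter_eq (f := f) (c := c) (B := B) (a := a) hl1 he heR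
    have := notMem_larState (f := f) (c := c) (B := B) (a := a) (l1 := l1) (R := R) e
    rw [hZ]
    split_ifs <;> simp_all [larState]
  · exact iff_of_false (fun h => heR (mem_of_mem_larScan h).2) (fun h => heR h.1)

theorem preceding_larScan (hl1 : l1.Nodup) {e : α}
    (he : e ∈ larScan f c B a (l1.filter (· ∈ R))) :
    preceding (larScan f c B a (l1.filter (· ∈ R))) e = (larState f c B a l1 R e).toFinset := by
  obtain ⟨hel1, heR⟩ := mem_of_mem_larScan he
  obtain ⟨Z, -, hZ⟩ := larScan_filter_eq (f := f) (c := c) (B := B) (a := a) hl1 hel1 heR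
  rw [hZ, if_pos ((mem_larScan_iff hl1 hel1).1 he).2, List.append_assoc, List.singleton_append]
  exact preceding_append_cons (notMem_larState e) Z

theorem f_takeCost_le_f_larOut (R : Finset α) (emax : α) :
    f (takeCost c B (larScan f c B a (l1.filter (· ∈ R))).reverse).toFinset ≤
      f (larOut f c B a l1 R emax) := by
  dsimp only [larOut]
  split_ifs with h
  · exact h
  · exact le_rfl

theorem f_singleton_le_f_larOut (R : Finset α) (emax : α) :
    f {emax} ≤ f (larOut f c B a l1 R emax) := by
  dsimp only [larOut]
  split_ifs with h
  · exact le_rfl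
  · exact (not_le.1 h).le

theorem f_singleton_le_bernoulliExp_larOut {p : ℝ} (hp0 : 0 ≤ p) (hp1 : p ≤ 1) (U : Finset α)
    (emax : α) : f {emax} ≤ bernoulliExp p U (fun R => f (larOut f c B a l1 R emax)) :=
  (bernoulliExp_const p U _).symm.le.trans
    (bernoulliExp_mono hp0 hp1 fun R _ => f_singleton_le_f_larOut R emax)

end LARState

structure LARSetting [DecidableEq α] (f : Finset α → ℝ) (c : α → ℝ) (B a : ℝ) (V : Finset α)
    (l1 : List α) : Prop where
  budget_pos : 0 < B
  param_nonneg : 0 ≤ a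
  nonneg : ∀ X ⊆ V, 0 ≤ f X
  map_empty : f ∅ = 0
  submodular : SubmodularOn f V
  nodup : l1.Nodup
  mem : ∀ x ∈ l1, x ∈ V ∧ 0 < c x ∧ c x ≤ B / 2

namespace LARSetting

variable [DecidableEq α] {f : Finset α → ℝ} {c : α → ℝ} {B a : ℝ} {V : Finset α} {l1 : List α}
  (h : LARSetting f c B a V l1)
include h

section Sample

variable (R : Finset α)

theorem larSet_subset : larSet f c B a l1 R ⊆ V := fun x hx =>
  (h.mem x (mem_of_mem_larSet hx).1).1

theorem f_larState_nonneg (e : α) : 0 ≤ f (larState f c B a l1 R e).toFinset :=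
  h.nonneg _ ((larState_subset e).trans (h.larSet_subset R))

theorem f_larState_le (e : α) :
    f (larState f c B a l1 R e).toFinset ≤ f (larSet f c B a l1 R) := by
  obtain ⟨Z, hZ⟩ := larState_prefix (f := f) (c := c) (B := B) (a := a) (l1 := l1) (R := R) e
  have hchain := densityChain_larScan (f := f) (c := c) (B := B) (a := a) (l1.filter (· ∈ R))
  rw [larSet, ← hZ]
  rw [← hZ] at hchain
  refine hchain.le_append h.param_nonneg h.budget_pos (fun x hx => ?_) (h.f_larState_nonneg R e)
  have hxS : x ∈ larScan f c B a (l1.filter (· ∈ R)) := hZ ▸ List.mem_append_right _ hx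
  exact (h.mem x (mem_of_mem_larScan hxS).1).2.1

theorem mul_le_marg_larState {x : α} (hx : x ∈ larSet f c B a l1 R) :
    a * c x * f (larState f c B a l1 R x).toFinset / B ≤
      marg f x (larState f c B a l1 R x).toFinset := by
  have hxl1 := (mem_of_mem_larScan (mem_larSet.1 hx)).1
  have hthr := ((mem_larScan_iff h.nodup hxl1).1 (mem_larSet.1 hx)).2
  have := (le_div_iff₀ (h.mem x hxl1).2.1).1 hthr
  linarith [show a * c x * f (larState f c B a l1 R x).toFinset / B =
    a * f (larState f c B a l1 R x).toFinset / B * c x by ring]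

theorem marg_larState_lt {x : α} (hxl1 : x ∈ l1) (hxR : x ∈ R)
    (hx : x ∉ larSet f c B a l1 R) :
    marg f x (larState f c B a l1 R x).toFinset <
      a * c x * f (larState f c B a l1 R x).toFinset / B := by
  have hthr : ¬ _ := fun hthr => hx (mem_larSet.2 ((mem_larScan_iff h.nodup hxl1).2 ⟨hxR, hthr⟩))
  have := (div_lt_iff₀ (h.mem x hxl1).2.1).1 (not_le.1 hthr)
  linarith [show a * c x * f (larState f c B a l1 R x).toFinset / B =
    a * f (larState f c B a l1 R x).toFinset / B * c x by ring]

theorem f_larSet_eq_sum :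
    f (larSet f c B a l1 R) =
      ∑ x ∈ larSet f c B a l1 R,
        marg f x (larState f c B a l1 R x).toFinset := by
  rw [larSet, eq_add_sum_marg_preceding f (h.nodup.filter _).larScan, h.map_empty, zero_add]
  exact Finset.sum_congr rfl fun x hx =>
    by rw [preceding_larScan h.nodup (List.mem_toFinset.1 hx)]

theorem mul_f_larSet_le :
    a * f (larSet f c B a l1 R) ≤
      (a + 2) * f (takeCost c B (larScan f c B a (l1.filter (· ∈ R))).reverse).toFinset :=
  (densityChain_larScan _).mul_le_takeCost (h.nodup.filter _).larScan
    (h.larSet_subset R) h.submodular h.nonneg h.map_empty h.param_nonneg h.budget_pos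
    fun x hx => (h.mem x (mem_of_mem_larScan hx).1).2

theorem cost_takeCost_le :
    cost c (takeCost c B (larScan f c B a (l1.filter (· ∈ R))).reverse).toFinset ≤ B := by
  have hnd : (takeCost c B (larScan f c B a (l1.filter (· ∈ R))).reverse).Nodup :=
    (takeCost_prefix c B _).sublist.nodup (List.nodup_reverse.2 (h.nodup.filter _).larScan)
  rw [cost, List.sum_toFinset _ hnd]
  exact sum_takeCost_le c h.budget_pos.le _

theorem threshold_nonneg {e : α} (he : e ∈ l1) :
    0 ≤ a * c e * f (larState f c B a l1 R e).toFinset / B :=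
  div_nonneg (mul_nonneg (mul_nonneg h.param_nonneg (h.mem e he).2.1.le)
    (h.f_larState_nonneg R e)) h.budget_pos.le

theorem f_union_larSet_le {O : Finset α} (hO : O ⊆ l1.toFinset) :
    f (O ∪ larSet f c B a l1 R) ≤
      f (larSet f c B a l1 R) + ∑ e ∈ O,
        if e ∈ R then a * c e * f (larState f c B a l1 R e).toFinset / B
        else marg f e (larState f c B a l1 R e).toFinset := by
  set S := larSet f c B a l1 R
  have hl1 : ∀ e ∈ O, e ∈ l1 := fun e he => List.mem_toFinset.1 (hO he)
  have hSV := h.larSet_subset R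
  calc f (O ∪ S) ≤ f S + ∑ e ∈ O \ S, marg f e S :=
        h.submodular.le_add_sum_marg (fun e he => (h.mem e (hl1 e he)).1) hSV
    _ ≤ f S + ∑ e ∈ O \ S, if e ∈ R then a * c e * f (larState f c B a l1 R e).toFinset / B
          else marg f e (larState f c B a l1 R e).toFinset := by
        gcongr with e he
        obtain ⟨heO, heS⟩ := Finset.mem_sdiff.1 he
        have hmarg : marg f e S ≤ marg f e (larState f c B a l1 R e).toFinset :=
          h.submodular _ _ (larState_subset e) hSV e (h.mem e (hl1 e heO)).1 heS
        split_ifs with heR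
        · exact hmarg.trans (h.marg_larState_lt R (hl1 e heO) heR heS).le
        · exact hmarg
    _ ≤ _ := by
        gcongr 1
        refine Finset.sum_le_sum_of_subset_of_nonneg Finset.sdiff_subset fun e heO heS => ?_
        have heS' : e ∈ S := by simpa [heO] using heS
        have heR : e ∈ R := (mem_of_mem_larSet heS').2
        rw [if_pos heR]
        exact h.threshold_nonneg R (hl1 e heO)

theorem sum_marg_larState_le {O : Finset α} (hO : O ⊆ l1.toFinset) :
    (∑ e ∈ O, if e ∈ R then marg f e (larState f c B a l1 R e).toFinset else 0) ≤
      f (larSet f c B a l1 R) + ∑ e ∈ O,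
        if e ∈ R then a * c e * f (larState f c B a l1 R e).toFinset / B else 0 := by
  set S := larSet f c B a l1 R
  have hl1 : ∀ e ∈ O, e ∈ l1 := fun e he => List.mem_toFinset.1 (hO he)
  have hM : ∀ e ∈ S, 0 ≤ marg f e (larState f c B a l1 R e).toFinset := fun e he =>
    (h.threshold_nonneg R (mem_of_mem_larSet he).1).trans
      (h.mul_le_marg_larState R he)
  calc (∑ e ∈ O, if e ∈ R then marg f e (larState f c B a l1 R e).toFinset else 0)
      ≤ ∑ e ∈ O, ((if e ∈ S then marg f e (larState f c B a l1 R e).toFinset else 0) +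
          if e ∈ R then a * c e * f (larState f c B a l1 R e).toFinset / B else 0) := by
        gcongr with e heO
        have hG := h.threshold_nonneg R (hl1 e heO)
        by_cases heS : e ∈ S
        · have heR := (mem_of_mem_larSet heS).2
          simp only [heS, heR, if_true]
          linarith
        · by_cases heR : e ∈ R
          · simp only [heS, heR, if_true, if_false, zero_add]
            exact (h.marg_larState_lt R (hl1 e heO) heR heS).le
          · simp [heS, heR]
    _ ≤ _ := by
        rw [Finset.sum_add_distrib, Finset.sum_ite_mem, h.f_larSet_eq_sum]
        exact add_le_add_left (Finset.sum_le_sum_of_subset_of_nonneg Finset.inter_subset_right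
          fun e he _ => hM e he) _

theorem cost_larOut_le {emax : α} (hemax : c emax ≤ B) : cost c (larOut f c B a l1 R emax) ≤ B := by
  dsimp only [larOut]
  split_ifs
  · simpa [cost] using hemax
  · exact h.cost_takeCost_le R

end Sample

variable {p : ℝ}

theorem one_sub_mul_le_bernoulliExp_f_union (hp0 : 0 ≤ p) (hp1 : p ≤ 1) {O : Finset α}
    (hO : O ⊆ l1.toFinset) :
    (1 - p) * f O ≤
      bernoulliExp p l1.toFinset (fun R => f (O ∪ larSet f c B a l1 R)) := by
  set U := l1.toFinset
  have hUV : U ⊆ V := fun x hx => (h.mem x (List.mem_toFinset.1 hx)).1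
  have hSU : ∀ R : Finset α, larSet f c B a l1 R ⊆ U := fun R x hx =>
    List.mem_toFinset.2 (mem_of_mem_larSet hx).1
  have hmarginal : ∀ e ∈ U, bernoulliExp p U
      (fun R => if e ∈ larSet f c B a l1 R then 1 else 0) ≤ p :=
    fun e he => calc
      _ ≤ bernoulliExp p U (fun R => if e ∈ R then 1 else 0) :=
        bernoulliExp_mono hp0 hp1 fun R _ => by
          by_cases heS : e ∈ larSet f c B a l1 R
          · simp [heS, (mem_of_mem_larSet heS).2]
          · simp only [heS, if_false]
            split_ifs <;> norm_num
      _ = p := by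
        rw [bernoulliExp_ite he (fun _ => rfl) (fun _ => rfl), bernoulliExp_const,
          bernoulliExp_const]
        ring
  simpa [bernoulliExp] using (h.submodular.comp_union (hO.trans hUV) hUV).sampling
    (fun X hX => h.nonneg _ (Finset.union_subset (hO.trans hUV) (hX.trans hUV)))
    (fun R _ => bernoulliWeight_nonneg hp0 hp1 U R) (sum_bernoulliWeight p U)
    (fun R _ => hSU R) hp0 hmarginal

/- The scan's state at `e` does not depend on whether `e` is sampled (`larState_erase`), so
`bernoulliExp_ite` splits the expectations below according to `e ∈ R`. -/

theorem bernoulliExp_f_union_le (hp0 : 0 ≤ p) (hp1 : p ≤ 1) {O : Finset α}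
    (hO : O ⊆ l1.toFinset) :
    bernoulliExp p l1.toFinset (fun R => f (O ∪ larSet f c B a l1 R))
      ≤ bernoulliExp p l1.toFinset (fun R => f (larSet f c B a l1 R)) +
        p * ∑ e ∈ O, bernoulliExp p l1.toFinset
          (fun R => a * c e * f (larState f c B a l1 R e).toFinset / B) +
        (1 - p) * ∑ e ∈ O, bernoulliExp p l1.toFinset
          (fun R => marg f e (larState f c B a l1 R e).toFinset) := by
  refine (bernoulliExp_mono hp0 hp1 fun R _ => h.f_union_larSet_le R hO).trans_eq ?_
  rw [bernoulliExp_add, bernoulliExp_sum, Finset.sum_congr rfl fun e he =>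
    bernoulliExp_ite (hO he) (fun R => by simp only [larState_erase])
      (fun R => by simp only [larState_erase]),
    Finset.sum_add_distrib, Finset.mul_sum, Finset.mul_sum, add_assoc]

theorem mul_sum_bernoulliExp_marg_le (hp0 : 0 ≤ p) (hp1 : p ≤ 1) {O : Finset α}
    (hO : O ⊆ l1.toFinset) :
    p * ∑ e ∈ O, bernoulliExp p l1.toFinset (fun R => marg f e (larState f c B a l1 R e).toFinset)
      ≤ bernoulliExp p l1.toFinset (fun R => f (larSet f c B a l1 R)) +
        p * ∑ e ∈ O, bernoulliExp p l1.toFinset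
          (fun R => a * c e * f (larState f c B a l1 R e).toFinset / B) := by
  have := bernoulliExp_mono (U := l1.toFinset) hp0 hp1 fun R _ => h.sum_marg_larState_le R hO
  rwa [bernoulliExp_add, bernoulliExp_sum, bernoulliExp_sum, Finset.sum_congr rfl fun e he =>
    bernoulliExp_ite (hO he) (fun R => by simp only [larState_erase]) (fun _ => rfl),
    Finset.sum_congr rfl fun e he =>
    bernoulliExp_ite (hO he) (fun R => by simp only [larState_erase]) (fun _ => rfl),
    bernoulliExp_const, mul_zero, Finset.sum_congr rfl fun _ _ => add_zero _,
    Finset.sum_congr rfl fun _ _ => add_zero _, ← Finset.mul_sum, ← Finset.mul_sum] at this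

theorem sum_bernoulliExp_threshold_le (hp0 : 0 ≤ p) (hp1 : p ≤ 1) {O : Finset α}
    (hO : O ⊆ l1.toFinset) :
    ∑ e ∈ O, bernoulliExp p l1.toFinset
        (fun R => a * c e * f (larState f c B a l1 R e).toFinset / B) ≤
      a * (cost c O / B) *
        bernoulliExp p l1.toFinset (fun R => f (larSet f c B a l1 R)) := by
  calc _ ≤ ∑ e ∈ O, a * c e / B *
        bernoulliExp p l1.toFinset (fun R => f (larSet f c B a l1 R)) :=
      Finset.sum_le_sum fun e he => by
        rw [← bernoulliExp_const_mul]
        refine bernoulliExp_mono hp0 hp1 fun R _ => ?_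
        rw [mul_div_right_comm]
        exact mul_le_mul_of_nonneg_left (h.f_larState_le R e) (div_nonneg
          (mul_nonneg h.param_nonneg (h.mem e (List.mem_toFinset.1 (hO he))).2.1.le)
          h.budget_pos.le)
    _ = _ := by
      rw [← Finset.sum_mul, ← Finset.sum_div, ← Finset.mul_sum, cost, mul_div_assoc]

theorem mul_f_le_bernoulliExp (hp0 : 0 ≤ p) (hp1 : p ≤ 1) {O : Finset α}
    (hO : O ⊆ l1.toFinset) :
    p * (1 - p) * f O ≤ (1 + p * a * (cost c O / B)) *
      bernoulliExp p l1.toFinset (fun R => f (larSet f c B a l1 R)) := by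
  nlinarith [mul_le_mul_of_nonneg_left (h.one_sub_mul_le_bernoulliExp_f_union hp0 hp1 hO) hp0,
    mul_le_mul_of_nonneg_left (h.bernoulliExp_f_union_le hp0 hp1 hO) hp0,
    mul_le_mul_of_nonneg_left (h.mul_sum_bernoulliExp_marg_le hp0 hp1 hO) (sub_nonneg.2 hp1),
    mul_le_mul_of_nonneg_left (h.sum_bernoulliExp_threshold_le hp0 hp1 hO) hp0]

theorem f_le_mul_bernoulliExp_larOut (hp0 : 0 < p) (hp1 : p < 1) (ha : 0 < a) {O : Finset α}
    (hO : O ⊆ l1.toFinset) {t K : ℝ} (ht : cost c O / B ≤ t)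
    (hK : (1 + p * a * t) * (a + 2) ≤ K * (a * (p * (1 - p)))) (emax : α) :
    f O ≤ K * bernoulliExp p l1.toFinset (fun R => f (larOut f c B a l1 R emax)) := by
  set Y := bernoulliExp p l1.toFinset (fun R => f (larSet f c B a l1 R))
  set F := bernoulliExp p l1.toFinset (fun R => f (larOut f c B a l1 R emax))
  have hY0 : 0 ≤ Y := bernoulliExp_nonneg hp0.le hp1.le fun R _ => h.nonneg _ (h.larSet_subset R)
  have hYF : a * Y ≤ (a + 2) * F := by
    rw [← bernoulliExp_const_mul, ← bernoulliExp_const_mul]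
    exact bernoulliExp_mono hp0.le hp1.le fun R _ => (h.mul_f_larSet_le R).trans
      (mul_le_mul_of_nonneg_left (f_takeCost_le_f_larOut R emax) (by linarith))
  have ht0 : 0 ≤ t := le_trans (div_nonneg (Finset.sum_nonneg fun e he =>
    (h.mem e (List.mem_toFinset.1 (hO he))).2.1.le) h.budget_pos.le) ht
  have hpa : 0 < a * (p * (1 - p)) := mul_pos ha (mul_pos hp0 (sub_pos.2 hp1))
  refine le_of_mul_le_mul_left ?_ hpa
  calc a * (p * (1 - p)) * f O = a * (p * (1 - p) * f O) := by ring
    _ ≤ a * ((1 + p * a * t) * Y) := by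
        refine mul_le_mul_of_nonneg_left ((h.mul_f_le_bernoulliExp hp0.le hp1.le hO).trans
          (mul_le_mul_of_nonneg_right ?_ hY0)) ha.le
        nlinarith [mul_pos hp0 ha]
    _ = (1 + p * a * t) * (a * Y) := by ring
    _ ≤ (1 + p * a * t) * ((a + 2) * F) := mul_le_mul_of_nonneg_left hYF (by positivity)
    _ = (1 + p * a * t) * (a + 2) * F := by ring
    _ ≤ K * (a * (p * (1 - p))) * F := mul_le_mul_of_nonneg_right hK (by nlinarith)
    _ = a * (p * (1 - p)) * (K * F) := by ring

end LARSetting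

theorem cost_erase_le_half [DecidableEq α] {c : α → ℝ} {B : ℝ} {O : Finset α} {o : α}
    (hO : cost c O ≤ B) (ho : o ∈ O) (hco : B / 2 < c o) : cost c (O.erase o) ≤ B / 2 := by
  rw [cost, Finset.sum_erase_eq_sub ho]
  rw [cost] at hO
  linarith

theorem lar_constants {p a : ℝ} (hp : p = √2 - 1) (ha : a = √(2 + 2 * √2)) :
    0 < p ∧ p < 1 ∧ 0 < a ∧ (1 + p * a * 1) * (a + 2) ≤ 16.034 * (a * (p * (1 - p))) ∧
      (1 + p * a * (1 / 2)) * (a + 2) ≤ 15.034 * (a * (p * (1 - p))) := by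
  have hs2 : √2 ^ 2 = 2 := Real.sq_sqrt (by norm_num)
  have hs0 : 0 ≤ √2 := Real.sqrt_nonneg 2
  have hslb : 1.414213 ≤ √2 := by nlinarith
  have hsup : √2 ≤ 1.414214 := by nlinarith
  have ha2 : a ^ 2 = 2 + 2 * √2 := by rw [ha]; exact Real.sq_sqrt (by positivity)
  have ha0 : 0 < a := by rw [ha]; positivity
  have halb : 2.19736 ≤ a := by nlinarith
  have haub : a ≤ 2.19738 := by nlinarith
  subst hp
  refine ⟨by linarith, by linarith, ha0, ?_, ?_⟩ <;>
    nlinarith [mul_le_mul halb hslb (by norm_num) (by linarith)]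

end

theorem lar_approx_general {α : Type*} [DecidableEq α]
    (V : Finset α) (f : Finset α → ℝ) (c : α → ℝ) (B : ℝ) (hB : 0 < B)
    (hnonneg : ∀ S, S ⊆ V → 0 ≤ f S) (hnorm : f ∅ = 0)
    (hsub : ∀ A B' : Finset α, A ⊆ B' → B' ⊆ V → ∀ e ∈ V, e ∉ B' →
      f (insert e B') - f B' ≤ f (insert e A) - f A)
    (hc : ∀ e ∈ V, 0 < c e ∧ c e ≤ B)
    -- the fixed scanning order of `V1 = {e ∈ V : c(e) ≤ B/2}`
    (l1 : List α) (hl1d : l1.Nodup)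
    (hl1V : l1.toFinset = V.filter (fun e => c e ≤ B / 2))
    -- the maximal singleton `e_max = argmax_{e ∈ V} f({e})`
    (emax : α) (hemaxV : emax ∈ V) (hemax : ∀ e ∈ V, f {e} ≤ f {emax})
    -- the parameters of the algorithm
    (p a : ℝ) (hp : p = Real.sqrt 2 - 1) (ha : a = Real.sqrt (2 + 2 * Real.sqrt 2))
    -- an optimal solution
    (O : Finset α) (hO : O ⊆ V) (hOc : cost c O ≤ B) :
    (∀ R ∈ (V.filter (fun e => c e ≤ B / 2)).powerset,
        cost c (larOut f c B a l1 R emax) ≤ B) ∧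
      f O ≤ 16.034 * ∑ R ∈ (V.filter (fun e => c e ≤ B / 2)).powerset,
        p ^ R.card * (1 - p) ^ ((V.filter (fun e => c e ≤ B / 2)).card - R.card) *
          f (larOut f c B a l1 R emax) := by
  obtain ⟨hp0, hp1, ha0, hK, hK'⟩ := lar_constants hp ha
  have hV1 : ∀ {e}, e ∈ V → c e ≤ B / 2 → e ∈ l1.toFinset := fun he hce => by
    rw [hl1V, Finset.mem_filter]
    exact ⟨he, hce⟩
  have h : LARSetting f c B a V l1 := ⟨hB, ha0.le, hnonneg, hnorm, hsub, hl1d, fun x hx => by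
    obtain ⟨hxV, hx⟩ := Finset.mem_filter.1 (hl1V ▸ List.mem_toFinset.2 hx)
    exact ⟨hxV, (hc x hxV).1, hx⟩⟩
  rw [← hl1V]
  refine ⟨fun R _ => h.cost_larOut_le R (hc emax hemaxV).2, ?_⟩
  change f O ≤ 16.034 * bernoulliExp p l1.toFinset (fun R => f (larOut f c B a l1 R emax))
  by_cases hbig : ∃ o ∈ O, B / 2 < c o
  · -- such an `o` is unique, and is paid for by `emax`
    obtain ⟨o, ho, hco⟩ := hbig
    have hcost := cost_erase_le_half hOc ho hco
    have hO' : O.erase o ⊆ l1.toFinset := fun e he => hV1 (hO (Finset.mem_of_mem_erase he))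
      ((Finset.single_le_sum (fun x hx => (hc x (hO (Finset.mem_of_mem_erase hx))).1.le) he).trans
        hcost)
    linarith [h.f_le_mul_bernoulliExp_larOut hp0 hp1 ha0 hO' ((div_le_iff₀ hB).2 (by linarith))
      hK' emax, (hemax o (hO ho)).trans (f_singleton_le_bernoulliExp_larOut (c := c) (B := B)
      (a := a) (l1 := l1) hp0.le hp1.le l1.toFinset emax), h.submodular.le_erase_add_singleton hO ho]
  · push Not at hbig
    exact h.f_le_mul_bernoulliExp_larOut hp0 hp1 ha0 (fun e he => hV1 (hO he) (hbig e he))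
      ((div_le_one hB).2 hOc) hK emax

/-- With parameters `p = √2 − 1` and `α = √(2 + 2√2)`, the random output
`S` of algorithm `LAR` is always feasible (`c(S) ≤ B`) and satisfies
`opt ≤ 16.034 · E[f(S)]`, the expectation being over the random sample `V_p ⊆ V1` that
includes each element of `V1` independently with probability `p`. -/
theorem lar_approx {α : Type*} [DecidableEq α]
    (V : Finset α) (f : Finset α → ℝ) (c : α → ℝ) (B : ℝ) (hB : 0 < B)
    (hnonneg : ∀ S, S ⊆ V → 0 ≤ f S) (hnorm : f ∅ = 0)
    (hsub : ∀ A B' : Finset α, A ⊆ B' → B' ⊆ V → ∀ e ∈ V, e ∉ B' →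
      f (insert e B') - f B' ≤ f (insert e A) - f A)
    (hc : ∀ e ∈ V, 0 < c e ∧ c e ≤ B)
    -- the fixed scanning order of `V1 = {e ∈ V : c(e) ≤ B/2}`
    (l1 : List α) (hl1d : l1.Nodup)
    (hl1V : l1.toFinset = V.filter (fun e => c e ≤ B / 2))
    -- the maximal singleton `e_max = argmax_{e ∈ V} f({e})`
    (emax : α) (hemaxV : emax ∈ V) (hemax : ∀ e ∈ V, f {e} ≤ f {emax})
    -- the parameters of the algorithm
    (p a : ℝ) (hp : p = Real.sqrt 2 - 1) (ha : a = Real.sqrt (2 + 2 * Real.sqrt 2))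
    -- an optimal solution
    (O : Finset α) (hO : O ⊆ V) (hOc : cost c O ≤ B)
    (hOopt : ∀ T, T ⊆ V → cost c T ≤ B → f T ≤ f O) :
    (∀ R ∈ (V.filter (fun e => c e ≤ B / 2)).powerset,
        cost c (larOut f c B a l1 R emax) ≤ B) ∧
      f O ≤ 16.034 * ∑ R ∈ (V.filter (fun e => c e ≤ B / 2)).powerset,
        p ^ R.card * (1 - p) ^ ((V.filter (fun e => c e ≤ B / 2)).card - R.card) *
          f (larOut f c B a l1 R emax) :=
  lar_approx_general V f c B hB hnonneg hnorm hsub hc l1 hl1d hl1V emax hemaxV hemax p a hp ha O hO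
    hOc
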